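/- arXiv:2008.12515 — 6 statements merged into one kernel-verified Lean document; each statement's English description precedes it below -/
import Mathlib

section
/- If Z is a decision structure and P is a modular partition of its node set (a partition all of whose blocks are modules), then the quotient graph Z/P (with nodes the blocks of P and an arc between blocks iff some arc of Z joins them) is again a decision structure: it is acyclic, has a unique source, and all arcs out of a given block can be assigned distinct labels inherited from Z. -/
/-- A labelled directed graph given by a partial out-arc map: `out v r` is the head of
the `r`-labelled arc out of `v`, if it exists.  (This encoding automatically ensures that
all arcs out of a given node have distinct labels.) -/
structure DGraph (V R : Type) where
  out : V → R → Option V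

namespace DGraph

variable {V R : Type}

/-- `v` has an arc to `w` (with some label). -/
def Adj (Z : DGraph V R) (v w : V) : Prop := ∃ r, Z.out v r = some w

/-- A source: a node that is the head of no arc. -/
def IsSource (Z : DGraph V R) (s : V) : Prop := ∀ v r, Z.out v r ≠ some s

/-- A sink: a node that is the tail of no arc. -/
def IsSink (Z : DGraph V R) (v : V) : Prop := ∀ r, Z.out v r = none

/-- `Z` is a decision structure: no parallel arcs (distinct labels out of a node have
distinct heads, so labelled arcs correspond to graph arcs), acyclic, unique source. -/
def IsDS (Z : DGraph V R) : Prop :=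
  (∀ v r₁ r₂ w, Z.out v r₁ = some w → Z.out v r₂ = some w → r₁ = r₂) ∧
  (∀ v, ¬ Relation.TransGen Z.Adj v v) ∧
  (∃! s, Z.IsSource s)

/-- Adjacency within the induced subgraph on `X`. -/
def AdjOn (Z : DGraph V R) (X : Set V) (v w : V) : Prop :=
  v ∈ X ∧ w ∈ X ∧ Z.Adj v w

/-- `s` is a source of the subgraph induced by `X`: it is in `X` and receives no arc
from a node of `X`. -/
def IsSourceOn (Z : DGraph V R) (X : Set V) (s : V) : Prop :=
  s ∈ X ∧ ∀ v ∈ X, ∀ r, Z.out v r ≠ some s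

/-- The subgraph induced by `X` is a decision structure: acyclic with a unique source. -/
def IsDSOn (Z : DGraph V R) (X : Set V) : Prop :=
  (∀ v, ¬ Relation.TransGen (Z.AdjOn X) v v) ∧ (∃! s, Z.IsSourceOn X s)

/-- `X` is a module of `Z`: the induced subgraph is a decision structure, every arc from
outside `X` into `X` goes to the source of `X`, and whenever an `r`-labelled arc leaves
`X` towards `v`, every node of `X` has an `r`-labelled out-arc going either to `v` or to
another node of `X`. -/
def IsModule (Z : DGraph V R) (X : Set V) : Prop :=
  Z.IsDSOn X ∧
  (∀ v, v ∉ X → ∀ r w, Z.out v r = some w → w ∈ X → Z.IsSourceOn X w) ∧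
  (∀ x ∈ X, ∀ r v, Z.out x r = some v → v ∉ X →
      ∀ y ∈ X, ∃ u, Z.out y r = some u ∧ (u = v ∨ u ∈ X))

end DGraph

namespace DGraph

variable {V R : Type}

/-- `P` is a partition of the node set. -/
def IsPartition (P : Set (Set V)) : Prop :=
  ∀ v : V, ∃! B, B ∈ P ∧ v ∈ B

/-- A modular partition: a partition of the node set all of whose blocks are modules. -/
def IsModularPartition (Z : DGraph V R) (P : Set (Set V)) : Prop :=
  IsPartition P ∧ ∀ B ∈ P, Z.IsModule B

/-- A maximal module: a proper module contained in no module other than the whole node set. -/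
def IsMaximalModule (Z : DGraph V R) (M : Set V) : Prop :=
  Z.IsModule M ∧ M ≠ Set.univ ∧
  ∀ M', Z.IsModule M' → M ⊆ M' → M' = M ∨ M' = Set.univ

/-- Quotient adjacency between two blocks: they are distinct and some arc of `Z` joins them. -/
def InterAdj (Z : DGraph V R) (B C : Set V) : Prop :=
  B ≠ C ∧ ∃ b ∈ B, ∃ c ∈ C, Z.Adj b c

end DGraph

/-!
An `r`-labelled arc leaving a module always ends at the same node, so every block of a
modular partition has at most one outgoing quotient arc per label; keeping a single label
for each pair of adjacent blocks then gives distinct labels on arcs with the same head.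
Every node of a finite module is reachable from its source, and an arc entering a module
ends at its source, so a quotient arc `B → C` lifts to a path of `Z` from the source of `B`
to the source of `C`, and a quotient cycle would lift to a cycle of `Z`. The block of the
source of `Z` receives no quotient arc, and any other block does: its own source is not a
source of `Z`, so it has a predecessor, which lies outside the block.
-/

open Relation

namespace DGraph

variable {V R α : Type}

theorem isSource_iff_forall_not_adj (Z : DGraph V R) (s : V) :
    Z.IsSource s ↔ ∀ v, ¬ Z.Adj v s :=
  forall_congr' fun _ => not_exists.symm

theorem exists_out_iff_of_functional (E : α → R → α → Prop)
    (hE : ∀ a r b b', E a r b → E a r b' → b = b') :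
    ∃ G : DGraph α R, ∀ a r b, G.out a r = some b ↔ E a r b := by
  classical
  refine ⟨⟨fun a r => if h : ∃ b, E a r b then some h.choose else none⟩, fun a r b => ?_⟩
  by_cases h : ∃ b, E a r b
  · simp only [dif_pos h, Option.some.injEq]
    exact ⟨fun hb => hb ▸ h.choose_spec, hE a r _ _ h.choose_spec⟩
  · simp only [dif_neg h, reduceCtorEq, false_iff]
    exact fun hb => h ⟨b, hb⟩

theorem exists_subgraph_without_parallel_arcs (G : DGraph α R) :
    ∃ Q : DGraph α R,
      (∀ a r₁ r₂ b, Q.out a r₁ = some b → Q.out a r₂ = some b → r₁ = r₂) ∧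
      (∀ a b, Q.Adj a b ↔ G.Adj a b) ∧
      (∀ a r b, Q.out a r = some b → G.out a r = some b) := by
  classical
  let Q : DGraph α R :=
    ⟨fun a r => if h : ∃ b, G.out a r = some b ∧ ∃ hab : G.Adj a b, hab.choose = r
      then some h.choose else none⟩
  have hQ : ∀ a r b,
      Q.out a r = some b ↔ G.out a r = some b ∧ ∃ hab : G.Adj a b, hab.choose = r := by
    intro a r b
    by_cases h : ∃ b, G.out a r = some b ∧ ∃ hab : G.Adj a b, hab.choose = r
    · simp only [Q, dif_pos h, Option.some.injEq]
      refine ⟨fun hb => hb ▸ h.choose_spec, fun hb => ?_⟩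
      exact Option.some.inj (h.choose_spec.1.symm.trans hb.1)
    · simp only [Q, dif_neg h, reduceCtorEq, false_iff]
      exact fun hb => h ⟨b, hb⟩
  refine ⟨Q, fun a r₁ r₂ b h₁ h₂ => ?_, fun a b => ⟨?_, fun hab => ?_⟩,
    fun a r b h => ((hQ a r b).1 h).1⟩
  · obtain ⟨-, hab, rfl⟩ := (hQ a r₁ b).1 h₁
    obtain ⟨-, -, rfl⟩ := (hQ a r₂ b).1 h₂
    rfl
  · rintro ⟨r, h⟩
    exact ⟨r, ((hQ a r b).1 h).1⟩
  · exact ⟨hab.choose, (hQ a _ b).2 ⟨hab.choose_spec, hab, rfl⟩⟩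

theorem IsPartition.eq_of_mem {P : Set (Set V)} (hP : IsPartition P) {B C : Set V}
    (hB : B ∈ P) (hC : C ∈ P) {v : V} (hvB : v ∈ B) (hvC : v ∈ C) : B = C :=
  (hP v).unique ⟨hB, hvB⟩ ⟨hC, hvC⟩

theorem IsPartition.not_mem_of_ne {P : Set (Set V)} (hP : IsPartition P) {B C : Set V}
    (hB : B ∈ P) (hC : C ∈ P) {v : V} (hvB : v ∈ B) (hne : B ≠ C) : v ∉ C :=
  fun hvC => hne (hP.eq_of_mem hB hC hvB hvC)

theorem IsDSOn.reflTransGen_of_isSourceOn [Finite V] {Z : DGraph V R} {X : Set V}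
    (hX : Z.IsDSOn X) {s : V} (hs : Z.IsSourceOn X s) {x : V} (hx : x ∈ X) :
    ReflTransGen (Z.AdjOn X) s x := by
  have : Std.Irrefl (TransGen (Z.AdjOn X)) := ⟨hX.1⟩
  have hwf : WellFounded (Z.AdjOn X) :=
    (Finite.wellFounded_of_trans_of_irrefl _).mono fun _ _ => TransGen.single
  induction x using hwf.induction with
  | _ x ih =>
    by_cases hxs : Z.IsSourceOn X x
    · rw [hX.2.unique hs hxs]
    · obtain ⟨y, hy, r, hyx⟩ : ∃ y ∈ X, ∃ r, Z.out y r = some x := by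
        simpa [IsSourceOn, hx] using hxs
      have hadj : Z.AdjOn X y x := ⟨hy, hx, r, hyx⟩
      exact (ih y hadj hy).tail hadj

theorem IsModule.eq_of_isSourceOn_of_out {Z : DGraph V R} {X : Set V} (hX : Z.IsModule X)
    {v w s : V} {r : R} (hv : v ∉ X) (hvw : Z.out v r = some w) (hw : w ∈ X)
    (hs : Z.IsSourceOn X s) : w = s :=
  hX.1.2.unique (hX.2.1 v hv r w hvw hw) hs

theorem IsModule.eq_of_out_of_not_mem {Z : DGraph V R} {X : Set V} (hX : Z.IsModule X)
    {r : R} {b c b' c' : V} (hb : b ∈ X) (hbc : Z.out b r = some c) (hc : c ∉ X)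
    (hb' : b' ∈ X) (hbc' : Z.out b' r = some c') (hc' : c' ∉ X) : c = c' := by
  obtain ⟨u, hu, hcase⟩ := hX.2.2 b hb r c hbc hc b' hb'
  obtain rfl : c' = u := Option.some.inj (hbc'.symm.trans hu)
  exact hcase.resolve_right hc' |>.symm

/-- The `r`-labelled arcs of the quotient. -/
def InterArc (Z : DGraph V R) (B : Set V) (r : R) (C : Set V) : Prop :=
  B ≠ C ∧ ∃ b ∈ B, ∃ c ∈ C, Z.out b r = some c

theorem exists_interArc_iff (Z : DGraph V R) (B C : Set V) :
    (∃ r, Z.InterArc B r C) ↔ Z.InterAdj B C := by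
  simp only [InterArc, InterAdj, Adj]
  aesop

namespace IsModularPartition

variable {Z : DGraph V R} {P : Set (Set V)}

theorem eq_of_interArc (hP : Z.IsModularPartition P) {B C C' : Set V} {r : R}
    (hB : B ∈ P) (hC : C ∈ P) (hC' : C' ∈ P)
    (h : Z.InterArc B r C) (h' : Z.InterArc B r C') : C = C' := by
  obtain ⟨hne, b, hb, c, hc, hbc⟩ := h
  obtain ⟨hne', b', hb', c', hc', hbc'⟩ := h'
  have hcc' : c = c' := (hP.2 B hB).eq_of_out_of_not_mem hb hbc
    (hP.1.not_mem_of_ne hC hB hc (Ne.symm hne)) hb' hbc'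
    (hP.1.not_mem_of_ne hC' hB hc' (Ne.symm hne'))
  exact hP.1.eq_of_mem hC hC' hc (hcc' ▸ hc')

theorem transGen_of_interAdj [Finite V] (hP : Z.IsModularPartition P) {B C : Set V}
    (hB : B ∈ P) (hC : C ∈ P) {s t : V} (hs : Z.IsSourceOn B s) (ht : Z.IsSourceOn C t)
    (h : Z.InterAdj B C) : TransGen Z.Adj s t := by
  obtain ⟨hne, b, hb, c, hc, r, hbc⟩ := h
  have hct : c = t :=
    (hP.2 C hC).eq_of_isSourceOn_of_out (hP.1.not_mem_of_ne hB hC hb hne) hbc hc ht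
  have hsb : ReflTransGen Z.Adj s b :=
    ReflTransGen.mono (fun _ _ h => h.2.2) _ _ ((hP.2 B hB).1.reflTransGen_of_isSourceOn hs hb)
  exact TransGen.tail' hsb ⟨r, hct ▸ hbc⟩

theorem not_transGen_interAdj [Finite V] (hZ : ∀ v, ¬ TransGen Z.Adj v v)
    (hP : Z.IsModularPartition P) (B : {B : Set V // B ∈ P}) :
    ¬ TransGen (fun B C : {B : Set V // B ∈ P} => Z.InterAdj B.1 C.1) B B := by
  choose src hsrc using fun B : {B : Set V // B ∈ P} => (hP.2 B.1 B.2).1.2.exists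
  intro hcyc
  exact hZ _ (TransGen.lift' src
    (fun B C h => hP.transGen_of_interAdj B.2 C.2 (hsrc B) (hsrc C) h) _ _ hcyc)

theorem existsUnique_not_interAdj (hZ : ∃! s, Z.IsSource s) (hP : Z.IsModularPartition P) :
    ∃! S : {B : Set V // B ∈ P}, ∀ B : {B : Set V // B ∈ P}, ¬ Z.InterAdj B.1 S.1 := by
  obtain ⟨s, hs, hsu⟩ := hZ
  obtain ⟨S, hSP, hsS⟩ := (hP.1 s).exists
  refine ⟨⟨S, hSP⟩, ?_, ?_⟩
  · rintro ⟨B, hBP⟩ ⟨hBS, b, hb, c, hc, r, hbc⟩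
    have hcs : c = s := (hP.2 S hSP).eq_of_isSourceOn_of_out
      (hP.1.not_mem_of_ne hBP hSP hb hBS) hbc hc ⟨hsS, fun v _ r => hs v r⟩
    exact hs b r (hcs ▸ hbc)
  · rintro ⟨B, hBP⟩ hB
    by_contra hne
    obtain ⟨t, htB, ht⟩ := (hP.2 B hBP).1.2.exists
    have hts : t ≠ s := by
      rintro rfl
      exact hne (Subtype.ext (hP.1.eq_of_mem hBP hSP htB hsS))
    obtain ⟨v, r, hvt⟩ : ∃ v r, Z.out v r = some t := by
      simpa [IsSource] using mt (hsu t) hts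
    have hvB : v ∉ B := fun hv => ht v hv r hvt
    obtain ⟨C, hCP, hvC⟩ := (hP.1 v).exists
    have hCB : C ≠ B := fun hCB => hvB (hCB ▸ hvC)
    exact hB ⟨C, hCP⟩ ⟨hCB, v, hvC, t, htB, r, hvt⟩

end IsModularPartition

end DGraph

/-- The quotient of a decision structure by a modular partition is again
a decision structure: it is acyclic, has a unique source, and all arcs out of a block can
be assigned distinct labels inherited from `Z`. -/
theorem stmt_1 {V R : Type} [Fintype V] (Z : DGraph V R) (hZ : Z.IsDS)
    (P : Set (Set V)) (hP : Z.IsModularPartition P) :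
    ∃ Q : DGraph {B : Set V // B ∈ P} R,
      Q.IsDS ∧
      (∀ B C : {B : Set V // B ∈ P}, Q.Adj B C ↔ Z.InterAdj B.1 C.1) ∧
      (∀ (B C : {B : Set V // B ∈ P}) (r : R),
        Q.out B r = some C → ∃ b ∈ B.1, ∃ c ∈ C.1, Z.out b r = some c) := by
  obtain ⟨G, hG⟩ := DGraph.exists_out_iff_of_functional
    (fun (B : {B : Set V // B ∈ P}) (r : R) C => Z.InterArc B.1 r C.1)
    fun B r C C' h h' => Subtype.ext (hP.eq_of_interArc B.2 C.2 C'.2 h h')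
  obtain ⟨Q, hQsimple, hQadj, hQsub⟩ := G.exists_subgraph_without_parallel_arcs
  have hadj : ∀ B C, Q.Adj B C ↔ Z.InterAdj B.1 C.1 := fun B C => by
    rw [hQadj, ← DGraph.exists_interArc_iff]
    exact exists_congr fun r => hG B r C
  refine ⟨Q, ⟨hQsimple, fun B hcyc => ?_, ?_⟩, hadj,
    fun B C r h => ((hG B r C).1 (hQsub B r C h)).2⟩
  · exact hP.not_transGen_interAdj hZ.2.1 B (TransGen.mono (fun B C => (hadj B C).1) _ _ hcyc)
  · simpa only [DGraph.isSource_iff_forall_not_adj, hadj] using hP.existsUnique_not_interAdj hZ.2.2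
end

section
/- If Z is a decision structure and P is a maximal modular partition (every block is a maximal module, i.e., a proper module contained in no other module except N(Z)), then the quotient Z/P is prime: its only modules are the trivial ones (singletons and the whole node set). -/
/-!
Let `Y` be a module of the quotient `Z/P` and `X` the union of its blocks. Each block is a module
of `Z`, so every arc entering a block hits its source and all arcs leaving it towards a node
leave with one label (read it off at a sink of the block); hence sources, entering arcs and
leaving arcs of `X` are governed by those of `Y`, and `X` is a module of `Z`. It contains the
block `S` of the source of `Y`, so maximality of `S` forces `X = S`, i.e. `Y = {S}`, or `X` to be
everything, i.e. `Y` to be everything.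
-/

namespace DGraph

variable {V R : Type}

section Modules

variable {Z : DGraph V R} {M : Set V}

lemma IsModule.nonempty (hM : Z.IsModule M) : M.Nonempty :=
  let ⟨s, hs, _⟩ := hM.1.2
  ⟨s, hs.1⟩

lemma IsModule.eq_of_out_mem (hM : Z.IsModule M) {v v' w w' : V} {r r' : R}
    (hv : v ∉ M) (hv' : v' ∉ M) (h : Z.out v r = some w) (h' : Z.out v' r' = some w')
    (hw : w ∈ M) (hw' : w' ∈ M) : w = w' :=
  hM.1.2.unique (hM.2.1 v hv r w h hw) (hM.2.1 v' hv' r' w' h' hw')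

lemma exists_sinkOn [Finite V] (hacy : ∀ v, ¬ Relation.TransGen (Z.AdjOn M) v v)
    (hM : M.Nonempty) : ∃ y ∈ M, ∀ w ∈ M, ¬ Z.Adj y w := by
  let r : V → V → Prop := flip (Relation.TransGen (Z.AdjOn M))
  have : IsTrans V r := ⟨fun _ _ _ hab hbc => hbc.trans hab⟩
  have : Std.Irrefl r := ⟨hacy⟩
  obtain ⟨y, hyM, hmin⟩ := (Finite.wellFounded_of_trans_of_irrefl r).has_min M hM
  exact ⟨y, hyM, fun w hw hadj => hmin w hw (.single ⟨hyM, hw, hadj⟩)⟩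

/-- A sink of `M` has no arc inside `M`, so it carries both labels towards `v`. -/
lemma IsModule.label_eq_of_out_eq [Finite V]
    (hpar : ∀ v r₁ r₂ w, Z.out v r₁ = some w → Z.out v r₂ = some w → r₁ = r₂)
    (hM : Z.IsModule M) {x₁ x₂ v : V} {r₁ r₂ : R} (hx₁ : x₁ ∈ M) (hx₂ : x₂ ∈ M) (hv : v ∉ M)
    (h₁ : Z.out x₁ r₁ = some v) (h₂ : Z.out x₂ r₂ = some v) : r₁ = r₂ := by
  obtain ⟨y, hyM, hsink⟩ := exists_sinkOn hM.1.1 hM.nonempty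
  have hy : ∀ {x r}, x ∈ M → Z.out x r = some v → Z.out y r = some v := by
    intro x r hx h
    obtain ⟨u, hu, rfl | huM⟩ := hM.2.2 x hx r v h hv y hyM
    · exact hu
    · exact absurd ⟨r, hu⟩ (hsink u huM)
  exact hpar y r₁ r₂ v (hy hx₁ h₁) (hy hx₂ h₂)

end Modules

namespace IsPartition

variable {P : Set (Set V)} (hP : IsPartition P)

noncomputable def block (v : V) : {B : Set V // B ∈ P} :=
  ⟨(hP v).exists.choose, (hP v).exists.choose_spec.1⟩

lemma mem_block (v : V) : v ∈ (hP.block v).1 :=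
  (hP v).exists.choose_spec.2

lemma block_eq_of_mem {v : V} {B : {B : Set V // B ∈ P}} (h : v ∈ B.1) : hP.block v = B :=
  Subtype.ext ((hP v).unique ⟨(hP.block v).2, hP.mem_block v⟩ ⟨B.2, h⟩)

lemma eq_of_mem_of_mem (hP : IsPartition P) {v : V} {B C : {B : Set V // B ∈ P}} (hB : v ∈ B.1) (hC : v ∈ C.1) :
    B = C :=
  (hP.block_eq_of_mem hB).symm.trans (hP.block_eq_of_mem hC)

lemma preimage_block_singleton (B : {B : Set V // B ∈ P}) : hP.block ⁻¹' {B} = B.1 :=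
  Set.ext fun _ => ⟨fun h => h ▸ hP.mem_block _, hP.block_eq_of_mem⟩

lemma subset_preimage_block {Y : Set {B : Set V // B ∈ P}} {B : {B : Set V // B ∈ P}}
    (hB : B ∈ Y) : B.1 ⊆ hP.block ⁻¹' Y :=
  fun _ hv => show hP.block _ ∈ Y from (hP.block_eq_of_mem hv).symm ▸ hB

lemma block_surjective (hne : ∀ B ∈ P, B.Nonempty) : Function.Surjective hP.block :=
  fun B =>
    let ⟨v, hv⟩ := hne B.1 B.2
    ⟨v, hP.block_eq_of_mem hv⟩

end IsPartition

/-- `Q` is the quotient `Z/P`. -/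
structure IsQuotient (Z : DGraph V R) (P : Set (Set V)) (Q : DGraph {B : Set V // B ∈ P} R) :
    Prop where
  adj_iff : ∀ B C, Q.Adj B C ↔ Z.InterAdj B.1 C.1
  exists_out_of_out : ∀ B C r, Q.out B r = some C → ∃ b ∈ B.1, ∃ c ∈ C.1, Z.out b r = some c

section Quotient

variable {Z : DGraph V R} {P : Set (Set V)} {Q : DGraph {B : Set V // B ∈ P} R}

lemma IsQuotient.ne_of_out (hQ : Z.IsQuotient P Q) {B C : {B : Set V // B ∈ P}} {r : R}
    (h : Q.out B r = some C) : B ≠ C := by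
  rintro rfl
  exact ((hQ.adj_iff B B).1 ⟨r, h⟩).1 rfl

variable (hP : IsPartition P)

lemma IsQuotient.adj_block (hQ : Z.IsQuotient P Q) {v w : V} {r : R} (h : Z.out v r = some w)
    (hne : hP.block v ≠ hP.block w) : Q.Adj (hP.block v) (hP.block w) :=
  (hQ.adj_iff _ _).2 ⟨fun h' => hne (Subtype.ext h'), v, hP.mem_block v, w, hP.mem_block w, r, h⟩

/-- `adj_iff` only provides some arc of `Q`; its label is `r` by `label_eq_of_out_eq`. -/
lemma IsQuotient.out_block [Finite V] (hQ : Z.IsQuotient P Q)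
    (hpar : ∀ v r₁ r₂ w, Z.out v r₁ = some w → Z.out v r₂ = some w → r₁ = r₂)
    (hmod : ∀ B ∈ P, Z.IsModule B) {x v : V} {r : R} (h : Z.out x r = some v)
    (hne : hP.block x ≠ hP.block v) : Q.out (hP.block x) r = some (hP.block v) := by
  obtain ⟨s, hs⟩ := hQ.adj_block hP h hne
  obtain ⟨b, hb, d, hd, hbd⟩ := hQ.exists_out_of_out _ _ s hs
  have hdv : d = v :=
    (hmod _ (hP.block v).2).eq_of_out_mem (fun hbv => hne (hP.eq_of_mem_of_mem hb hbv))
      (mt hP.block_eq_of_mem hne) hbd h hd (hP.mem_block v)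
  rwa [(hmod _ (hP.block x).2).label_eq_of_out_eq hpar (hP.mem_block x) hb
    (mt hP.block_eq_of_mem hne.symm) h (hdv ▸ hbd)]

lemma isSourceOn_preimage_block_iff (hmod : ∀ B ∈ P, Z.IsModule B) (hQ : Z.IsQuotient P Q)
    {Y : Set {B : Set V // B ∈ P}} {t : V} :
    Z.IsSourceOn (hP.block ⁻¹' Y) t ↔
      Z.IsSourceOn (hP.block t).1 t ∧ Q.IsSourceOn Y (hP.block t) := by
  constructor
  · rintro ⟨htY, ht⟩
    have htB : Z.IsSourceOn (hP.block t).1 t :=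
      ⟨hP.mem_block t, fun v hv => ht v (hP.subset_preimage_block htY hv)⟩
    refine ⟨htB, htY, fun D hD r hDr => ?_⟩
    obtain ⟨d, hd, c, hc, hdc⟩ := hQ.exists_out_of_out _ _ r hDr
    have hdt : d ∉ (hP.block t).1 := fun h => hQ.ne_of_out hDr (hP.eq_of_mem_of_mem hd h)
    have hBt := hmod _ (hP.block t).2
    have hct : c = t := hBt.1.2.unique (hBt.2.1 d hdt r c hdc hc) htB
    exact ht d (hP.subset_preimage_block hD hd) r (hct ▸ hdc)
  · rintro ⟨htB, htY⟩
    refine ⟨htY.1, fun v hv r hvt => ?_⟩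
    by_cases hvt' : hP.block v = hP.block t
    · exact htB.2 v (hvt' ▸ hP.mem_block v) r hvt
    · obtain ⟨s, hs⟩ := hQ.adj_block hP hvt hvt'
      exact htY.2 _ hv s hs

lemma isDSOn_preimage_block (hacy : ∀ v, ¬ Relation.TransGen Z.Adj v v)
    (hmod : ∀ B ∈ P, Z.IsModule B) (hQ : Z.IsQuotient P Q) {Y : Set {B : Set V // B ∈ P}}
    (hY : Q.IsDSOn Y) : Z.IsDSOn (hP.block ⁻¹' Y) := by
  refine ⟨fun v hv => hacy v (Relation.TransGen.mono (fun _ _ h => h.2.2) _ _ hv), ?_⟩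
  obtain ⟨S, hS, hSu⟩ := hY.2
  obtain ⟨s, hs, hsu⟩ := (hmod S.1 S.2).1.2
  have hsS : hP.block s = S := hP.block_eq_of_mem hs.1
  refine ⟨s, (isSourceOn_preimage_block_iff hP hmod hQ).2 ⟨hsS ▸ hs, hsS ▸ hS⟩, fun t ht => ?_⟩
  obtain ⟨htB, htY⟩ := (isSourceOn_preimage_block_iff hP hmod hQ).1 ht
  exact hsu t (hSu _ htY ▸ htB)

lemma isSourceOn_preimage_block_of_out (hmod : ∀ B ∈ P, Z.IsModule B)
    (hQ : Z.IsQuotient P Q) {Y : Set {B : Set V // B ∈ P}} (hY : Q.IsModule Y) {v w : V}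
    {r : R} (hv : v ∉ hP.block ⁻¹' Y) (h : Z.out v r = some w) (hw : w ∈ hP.block ⁻¹' Y) :
    Z.IsSourceOn (hP.block ⁻¹' Y) w := by
  have hne : hP.block v ≠ hP.block w := fun h' => hv (show hP.block v ∈ Y from h' ▸ hw)
  obtain ⟨s, hs⟩ := hQ.adj_block hP h hne
  exact (isSourceOn_preimage_block_iff hP hmod hQ).2
    ⟨(hmod _ (hP.block w).2).2.1 v (mt hP.block_eq_of_mem hne) r w h (hP.mem_block w),
      hY.2.1 _ hv s _ hs hw⟩

lemma exists_out_preimage_block [Finite V]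
    (hpar : ∀ v r₁ r₂ w, Z.out v r₁ = some w → Z.out v r₂ = some w → r₁ = r₂)
    (hmod : ∀ B ∈ P, Z.IsModule B) (hQ : Z.IsQuotient P Q) {Y : Set {B : Set V // B ∈ P}}
    (hY : Q.IsModule Y) {x v y : V} {r : R} (hx : x ∈ hP.block ⁻¹' Y)
    (h : Z.out x r = some v) (hv : v ∉ hP.block ⁻¹' Y) (hy : y ∈ hP.block ⁻¹' Y) :
    ∃ u, Z.out y r = some u ∧ (u = v ∨ u ∈ hP.block ⁻¹' Y) := by
  have hne : hP.block x ≠ hP.block v := fun h' => hv (show hP.block v ∈ Y from h' ▸ hx)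
  by_cases hyx : hP.block y = hP.block x
  · obtain ⟨u, hu, hcase⟩ := (hmod _ (hP.block x).2).2.2 x (hP.mem_block x) r v h
      (mt hP.block_eq_of_mem hne.symm) y (hyx ▸ hP.mem_block y)
    exact ⟨u, hu, hcase.imp_right (hP.subset_preimage_block hx ·)⟩
  obtain ⟨E, hE, hEcase⟩ := hY.2.2 _ hx r _ (hQ.out_block hP hpar hmod h hne) hv _ hy
  obtain ⟨c, hc, e, he, hce⟩ := hQ.exists_out_of_out _ _ r hE
  have hcE : c ∉ E.1 := fun hcE => hQ.ne_of_out hE (hP.eq_of_mem_of_mem hc hcE)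
  have heB : e ∉ (hP.block y).1 := fun heB => hQ.ne_of_out hE (hP.eq_of_mem_of_mem heB he)
  obtain ⟨u, hu, rfl | huB⟩ :=
    (hmod _ (hP.block y).2).2.2 c hc r e hce heB y (hP.mem_block y)
  · refine ⟨u, hu, hEcase.imp (fun hEv => ?_) (hP.subset_preimage_block · he)⟩
    subst hEv
    exact (hmod _ (hP.block v).2).eq_of_out_mem hcE (mt hP.block_eq_of_mem hne) hce h he
      (hP.mem_block v)
  · exact ⟨u, hu, Or.inr (hP.subset_preimage_block hy huB)⟩

theorem IsModule.preimage_block [Finite V] (hZ : Z.IsDS) (hmod : ∀ B ∈ P, Z.IsModule B)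
    (hQ : Z.IsQuotient P Q) {Y : Set {B : Set V // B ∈ P}} (hY : Q.IsModule Y) :
    Z.IsModule (hP.block ⁻¹' Y) :=
  ⟨isDSOn_preimage_block hP hZ.2.1 hmod hQ hY.1,
    fun _ hv _ _ h hw => isSourceOn_preimage_block_of_out hP hmod hQ hY hv h hw,
    fun _ hx _ _ h hv _ hy => exists_out_preimage_block hP hZ.1 hmod hQ hY hx h hv hy⟩

end Quotient

end DGraph

theorem stmt_2_general {V R : Type} [Fintype V] (Z : DGraph V R) (hZ : Z.IsDS)
    (P : Set (Set V)) (hP : Z.IsModularPartition P)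
    (hmax : ∀ B ∈ P, Z.IsMaximalModule B)
    (Q : DGraph {B : Set V // B ∈ P} R)
    (hQadj : ∀ B C : {B : Set V // B ∈ P}, Q.Adj B C ↔ Z.InterAdj B.1 C.1)
    (hQlab : ∀ (B C : {B : Set V // B ∈ P}) (r : R),
      Q.out B r = some C → ∃ b ∈ B.1, ∃ c ∈ C.1, Z.out b r = some c) :
    ∀ Y : Set {B : Set V // B ∈ P},
      Q.IsModule Y → (∃ B, Y = {B}) ∨ Y = Set.univ := by
  intro Y hY
  obtain ⟨S, hS, -⟩ := hY.1.2
  have hinj : Function.Injective (hP.1.block ⁻¹' ·) :=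
    Set.preimage_injective.2 (hP.1.block_surjective fun B hB => (hP.2 B hB).nonempty)
  rcases (hmax S.1 S.2).2.2 _ (hY.preimage_block hP.1 hZ hP.2 ⟨hQadj, hQlab⟩)
      (hP.1.subset_preimage_block hS.1) with h | h
  · exact Or.inl ⟨S, hinj (h.trans (hP.1.preimage_block_singleton S).symm)⟩
  · exact Or.inr (hinj (h.trans Set.preimage_univ.symm))

/-- The quotient of a decision structure by a maximal modular partition
is prime: its only modules are singletons and the whole node set. -/
theorem stmt_2 {V R : Type} [Fintype V] (Z : DGraph V R) (hZ : Z.IsDS)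
    (P : Set (Set V)) (hP : Z.IsModularPartition P)
    (hmax : ∀ B ∈ P, Z.IsMaximalModule B)
    (Q : DGraph {B : Set V // B ∈ P} R)
    (hQDS : Q.IsDS)
    (hQadj : ∀ B C : {B : Set V // B ∈ P}, Q.Adj B C ↔ Z.InterAdj B.1 C.1)
    (hQlab : ∀ (B C : {B : Set V // B ∈ P}) (r : R),
      Q.out B r = some C → ∃ b ∈ B.1, ∃ c ∈ C.1, Z.out b r = some c) :
    ∀ Y : Set {B : Set V // B ∈ P},
      Q.IsModule Y → (∃ B, Y = {B}) ∨ Y = Set.univ :=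
  stmt_2_general Z hZ P hP hmax Q hQadj hQlab
end

section
/- Let Z be a decision structure, Y a module of Z, and X a subset of Y. Then X is a module of Z if and only if X is a module of the induced subgraph Z[Y]. -/
namespace DGraph

variable {V R : Type}

open Classical in
/-- The induced subgraph `Z[X]`: only arcs with both endpoints in `X` are kept. -/
noncomputable def induce (Z : DGraph V R) (X : Set V) : DGraph V R :=
  ⟨fun v r =>
    match Z.out v r with
    | some w => if v ∈ X ∧ w ∈ X then some w else none
    | none => none⟩

end DGraph


/-!
Arcs inside `Y` are the same in `Z` and in `Z[Y]`, so the induced-subgraph and in-arc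
conditions transfer directly, and arcs of `Z` entering `X ⊆ Y` from outside `Y` are
handled by the module property of `Y`. The only real case is an `r`-arc from `x ∈ X`
leaving `Y`: the module property of `Y` sends the `r`-arc of any `y ∈ X` to the same
head or into `Y`, and if it landed in `Y \ X` the module property of `X` in `Z[Y]`
would force `x` to have an `r`-arc inside `Y`, which it does not.
-/

namespace DGraph

variable {V R : Type} {Z : DGraph V R} {X Y : Set V}

lemma induce_out_eq_some {v w : V} {r : R} :
    (Z.induce Y).out v r = some w ↔ Z.out v r = some w ∧ v ∈ Y ∧ w ∈ Y := by
  simp only [induce]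
  split <;> rename_i u h
  · split_ifs with hc
    · simp only [h, Option.some.injEq]
      exact ⟨fun hu => ⟨hu, hu ▸ hc⟩, fun hu => hu.1⟩
    · simp only [h, Option.some.injEq, false_iff, not_and]
      rintro rfl hv hw
      exact hc ⟨hv, hw⟩
  · simp [h]

lemma adjOn_induce (hXY : X ⊆ Y) : (Z.induce Y).AdjOn X = Z.AdjOn X := by
  ext v w
  simp only [AdjOn, Adj, induce_out_eq_some]
  constructor
  · rintro ⟨hv, hw, r, hr, -, -⟩
    exact ⟨hv, hw, r, hr⟩
  · rintro ⟨hv, hw, r, hr⟩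
    exact ⟨hv, hw, r, hr, hXY hv, hXY hw⟩

lemma isSourceOn_induce (hXY : X ⊆ Y) : (Z.induce Y).IsSourceOn X = Z.IsSourceOn X := by
  ext s
  refine and_congr_right fun hs => ⟨fun h v hv r hr => ?_, fun h v hv r hr => ?_⟩
  · exact h v hv r (induce_out_eq_some.mpr ⟨hr, hXY hv, hXY hs⟩)
  · exact h v hv r (induce_out_eq_some.mp hr).1

lemma isDSOn_induce_iff (hXY : X ⊆ Y) : (Z.induce Y).IsDSOn X ↔ Z.IsDSOn X := by
  rw [IsDSOn, IsDSOn, adjOn_induce hXY, isSourceOn_induce hXY]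

lemma IsModule.induce (hX : Z.IsModule X) (hXY : X ⊆ Y) : (Z.induce Y).IsModule X := by
  obtain ⟨hDS, hIn, hOut⟩ := hX
  refine ⟨(isDSOn_induce_iff hXY).mpr hDS, fun v hv r w hw hwX => ?_,
    fun x hx r v hv hvX y hy => ?_⟩
  · rw [isSourceOn_induce hXY]
    exact hIn v hv r w (induce_out_eq_some.mp hw).1 hwX
  · obtain ⟨hv, -, hvY⟩ := induce_out_eq_some.mp hv
    obtain ⟨u, hu, hu'⟩ := hOut x hx r v hv hvX y hy
    refine ⟨u, induce_out_eq_some.mpr ⟨hu, hXY hy, ?_⟩, hu'⟩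
    rcases hu' with rfl | huX
    exacts [hvY, hXY huX]

lemma IsModule.in_arc_of_induce (hY : Z.IsModule Y) (hXY : X ⊆ Y)
    (hX : (Z.induce Y).IsModule X) {v w : V} {r : R} (hvX : v ∉ X)
    (hw : Z.out v r = some w) (hwX : w ∈ X) : Z.IsSourceOn X w := by
  by_cases hvY : v ∈ Y
  · rw [← isSourceOn_induce hXY]
    exact hX.2.1 v hvX r w (induce_out_eq_some.mpr ⟨hw, hvY, hXY hwX⟩) hwX
  · exact ⟨hwX, fun u hu => (hY.2.1 v hvY r w hw (hXY hwX)).2 u (hXY hu)⟩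

lemma IsModule.out_arc_of_induce (hY : Z.IsModule Y) (hXY : X ⊆ Y)
    (hX : (Z.induce Y).IsModule X) {x v y : V} {r : R} (hx : x ∈ X)
    (hv : Z.out x r = some v) (hvX : v ∉ X) (hy : y ∈ X) :
    ∃ u, Z.out y r = some u ∧ (u = v ∨ u ∈ X) := by
  by_cases hvY : v ∈ Y
  · obtain ⟨u, hu, hu'⟩ :=
      hX.2.2 x hx r v (induce_out_eq_some.mpr ⟨hv, hXY hx, hvY⟩) hvX y hy
    exact ⟨u, (induce_out_eq_some.mp hu).1, hu'⟩
  obtain ⟨u, hu, hu'⟩ := hY.2.2 x (hXY hx) r v hv hvY y (hXY hy)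
  refine ⟨u, hu, ?_⟩
  rcases hu' with rfl | huY
  · exact Or.inl rfl
  by_contra! huX
  obtain ⟨u', hu', -⟩ :=
    hX.2.2 y hy r u (induce_out_eq_some.mpr ⟨hu, hXY hy, huY⟩) huX.2 x hx
  obtain ⟨hu', -, hu'Y⟩ := induce_out_eq_some.mp hu'
  rw [hv, Option.some_inj] at hu'
  exact hvY (hu' ▸ hu'Y)

lemma IsModule.of_induce (hY : Z.IsModule Y) (hXY : X ⊆ Y)
    (hX : (Z.induce Y).IsModule X) : Z.IsModule X :=
  ⟨(isDSOn_induce_iff hXY).mp hX.1,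
    fun _ hvX _ _ hw hwX => hY.in_arc_of_induce hXY hX hvX hw hwX,
    fun _ hx _ _ hv hvX _ hy => hY.out_arc_of_induce hXY hX hx hv hvX hy⟩

end DGraph

theorem stmt_3_general {V R : Type} (Z : DGraph V R)
    (Y X : Set V) (hY : Z.IsModule Y) (hXY : X ⊆ Y) :
    Z.IsModule X ↔ (Z.induce Y).IsModule X :=
  ⟨fun hX => hX.induce hXY, hY.of_induce hXY⟩

/-- For `Y` a module of `Z` and `X ⊆ Y`: `X` is a module of `Z` iff `X`
is a module of the induced subgraph `Z[Y]`. -/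
theorem stmt_3 {V R : Type} [Fintype V] (Z : DGraph V R) (hZ : Z.IsDS)
    (Y X : Set V) (hY : Z.IsModule Y) (hXY : X ⊆ Y) :
    Z.IsModule X ↔ (Z.induce Y).IsModule X :=
  stmt_3_general Z Y X hY hXY
end

section
/- Module contraction preserves the selected behavior: if Z is a decision structure with node labels given by actions, H is a module of Z, and Z/H is the contraction of H to a single node labelled by the derived action (H_B, H_R) of the sub-structure Z[H], then for every state w the action behavior selected satisfies Z_B(w) = (Z/H)_B(w). -/
namespace DGraph

variable {V R : Type}

/-- `Reaches Z ret v x`: starting at `v` and repeatedly following the out-arc labelled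
by the current node's return value (given by `ret`), one reaches `x`. -/
inductive Reaches (Z : DGraph V R) (ret : V → R) : V → V → Prop
  | refl (v : V) : Reaches Z ret v v
  | step {v w x : V} : Z.out v (ret v) = some w → Reaches Z ret w x → Reaches Z ret v x

/-- `x` is the node selected by the decision structure `Z` under the return-value
assignment `ret`: it is reached from the source and its return value matches no out-arc. -/
def SelectsFrom (Z : DGraph V R) (ret : V → R) (x : V) : Prop :=
  ∃ s, Z.IsSource s ∧ Z.Reaches ret s x ∧ Z.out x (ret x) = none

end DGraph

namespace DGraph

variable {V R : Type}

/-- `x` is the node selected within the substructure `Z[X]` under the return assignment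
`ret`: reached from the source of `X` along internal arcs, and its return value matches
no internal out-arc. -/
def SelectsIn (Z : DGraph V R) (X : Set V) (ret : V → R) (x : V) : Prop :=
  ∃ s, Z.IsSourceOn X s ∧ (Z.induce X).Reaches ret s x ∧
    (Z.induce X).out x (ret x) = none

end DGraph

/-- An action: a behavior `b` (producing a signal in `S` from a state in `W`) together
with a return-value function `ret : W → R`. -/
structure Act (W S R : Type) where
  b : W → S
  ret : W → R


/-
Follow the run of `Z` from its source and map each node to `Z/H` (nodes of `H` go to the
contracted node). Steps outside `H` are steps of `Z/H`, and steps inside `H` are invisible.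
Since `H` is entered only at its source, every node of `H` on the run is reached from that
source inside `Z[H]`; so the node where the run leaves `H` (or stops in it) is the node
selected by `Z[H]`, whose return value is the one of the contracted node, and the exit
conditions of a module make `Z/H` leave (or stop at) the contracted node in the same way.
Hence `Z/H` selects the image of the node selected by `Z`, which carries the same behavior.
-/

namespace DGraph

variable {V R : Type} {Z : DGraph V R} {X : Set V} {ret : V → R}

lemma induce_out_of_mem {v u : V} {r : R} (h : Z.out v r = some u) (hv : v ∈ X)
    (hu : u ∈ X) : (Z.induce X).out v r = some u := by
  simp only [induce, h, if_pos (And.intro hv hu)]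

lemma induce_out_of_out_eq_none {v : V} {r : R} (h : Z.out v r = none) :
    (Z.induce X).out v r = none := by
  simp only [induce, h]

lemma induce_out_of_not_mem {v u : V} {r : R} (h : Z.out v r = some u) (hu : u ∉ X) :
    (Z.induce X).out v r = none := by
  simp only [induce, h, if_neg (fun hvu : v ∈ X ∧ u ∈ X => hu hvu.2)]

lemma Reaches.trans {a b c : V} (hab : Z.Reaches ret a b) (hbc : Z.Reaches ret b c) :
    Z.Reaches ret a c := by
  induction hab with
  | refl => exact hbc
  | step hout _ ih => exact .step hout (ih hbc)

lemma Reaches.eq_of_out_eq_none {a b c : V} (hab : Z.Reaches ret a b)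
    (hb : Z.out b (ret b) = none) (hac : Z.Reaches ret a c) (hc : Z.out c (ret c) = none) :
    b = c := by
  induction hab with
  | refl =>
    cases hac with
    | refl => rfl
    | step hout _ => simp [hb] at hout
  | step hout _ ih =>
    cases hac with
    | refl => simp [hc] at hout
    | step hout' hac' =>
      obtain rfl := Option.some_injective _ (hout.symm.trans hout')
      exact ih hb hac'

def InternallyReached (Z : DGraph V R) (X : Set V) (ret : V → R) (a : V) : Prop :=
  a ∈ X → ∃ s, Z.IsSourceOn X s ∧ (Z.induce X).Reaches ret s a

lemma internallyReached_of_isSource {s : V} (hs : Z.IsSource s) :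
    Z.InternallyReached X ret s :=
  fun hsX => ⟨s, ⟨hsX, fun v _ r => hs v r⟩, .refl s⟩

lemma InternallyReached.of_out (hX : Z.IsModule X) {a b : V}
    (ha : Z.InternallyReached X ret a) (hab : Z.out a (ret a) = some b) :
    Z.InternallyReached X ret b := by
  intro hbX
  by_cases haX : a ∈ X
  · obtain ⟨s, hs, hsa⟩ := ha haX
    exact ⟨s, hs, hsa.trans (.step (induce_out_of_mem hab haX hbX) (.refl b))⟩
  · exact ⟨b, hX.2.1 a haX _ b hab hbX, .refl b⟩

lemma InternallyReached.reaches (hX : Z.IsModule X) {a b : V}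
    (ha : Z.InternallyReached X ret a) (hab : Z.Reaches ret a b) :
    Z.InternallyReached X ret b := by
  induction hab with
  | refl => exact ha
  | step hout _ ih => exact ih (ha.of_out hX hout)

lemma InternallyReached.selectsIn {a : V} (ha : Z.InternallyReached X ret a) (haX : a ∈ X)
    (hstop : (Z.induce X).out a (ret a) = none) : Z.SelectsIn X ret a :=
  let ⟨s, hs, hsa⟩ := ha haX
  ⟨s, hs, hsa, hstop⟩

lemma SelectsFrom.internallyReached (hX : Z.IsModule X) {x : V}
    (hx : Z.SelectsFrom ret x) : Z.InternallyReached X ret x :=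
  let ⟨_, hs, hsx, _⟩ := hx
  (internallyReached_of_isSource hs).reaches hX hsx

lemma SelectsFrom.selectsIn (hX : Z.IsModule X) {x : V} (hx : Z.SelectsFrom ret x)
    (hxX : x ∈ X) : Z.SelectsIn X ret x :=
  let ⟨_, _, _, hstop⟩ := hx
  (hx.internallyReached hX).selectsIn hxX (induce_out_of_out_eq_none hstop)

end DGraph

open Classical in
noncomputable def contractMap {V : Type} (H : Set V) (a : V) : {v : V // v ∉ H} ⊕ Unit :=
  if h : a ∈ H then .inr () else .inl ⟨a, h⟩

lemma contractMap_of_mem {V : Type} {H : Set V} {a : V} (h : a ∈ H) :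
    contractMap H a = .inr () := dif_pos h

lemma contractMap_of_not_mem {V : Type} {H : Set V} {a : V} (h : a ∉ H) :
    contractMap H a = .inl ⟨a, h⟩ := dif_neg h

namespace DGraph

variable {V R : Type}

structure IsContraction (Z : DGraph V R) (H : Set V) (Z' : DGraph ({v : V // v ∉ H} ⊕ Unit) R) :
    Prop where
  out_inl_inl : ∀ (v : {v : V // v ∉ H}) (r : R) (w : V) (hw : w ∉ H),
    Z.out v.1 r = some w → Z'.out (.inl v) r = some (.inl ⟨w, hw⟩)
  out_inl_inr : ∀ (v : {v : V // v ∉ H}) (r : R) (w : V),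
    Z.out v.1 r = some w → w ∈ H → Z'.out (.inl v) r = some (.inr ())
  out_inl_none : ∀ (v : {v : V // v ∉ H}) (r : R),
    Z.out v.1 r = none → Z'.out (.inl v) r = none
  out_inr_inl : ∀ (r : R) (w : V) (hw : w ∉ H),
    (∃ x ∈ H, Z.out x r = some w) → Z'.out (.inr ()) r = some (.inl ⟨w, hw⟩)
  out_inr_none : ∀ r : R, (¬ ∃ x ∈ H, ∃ w, w ∉ H ∧ Z.out x r = some w) →
    Z'.out (.inr ()) r = none

/-- The contracted node returns the derived value `H_R`, i.e. `ret` at the node selected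
by `Z[H]`. -/
structure IsContractedRet (Z : DGraph V R) (H : Set V) (ret : V → R)
    (ret' : ({v : V // v ∉ H} ⊕ Unit) → R) : Prop where
  ret_inl : ∀ v : {v : V // v ∉ H}, ret' (.inl v) = ret v.1
  ret_inr : ∀ x, Z.SelectsIn H ret x → ret' (.inr ()) = ret x

namespace IsContraction

variable {Z : DGraph V R} {H : Set V} {Z' : DGraph ({v : V // v ∉ H} ⊕ Unit) R}
  {ret : V → R} {ret' : ({v : V // v ∉ H} ⊕ Unit) → R}

lemma eq_contractMap_of_isSource (hC : IsContraction Z H Z') (hZ : ∃! s, Z.IsSource s)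
    (hH : Z.IsModule H) {s : V} (hs : Z.IsSource s) {t : {v : V // v ∉ H} ⊕ Unit}
    (ht : Z'.IsSource t) : t = contractMap H s := by
  rcases t with ⟨v, hv⟩ | ⟨⟩
  · have hv_source : Z.IsSource v := by
      intro a r hav
      by_cases ha : a ∈ H
      · exact ht _ r (hC.out_inr_inl r v hv ⟨a, ha, hav⟩)
      · exact ht _ r (hC.out_inl_inl ⟨a, ha⟩ r v hv hav)
    obtain rfl := hZ.unique hv_source hs
    exact (contractMap_of_not_mem hv).symm
  · by_cases hsH : s ∈ H
    · exact (contractMap_of_mem hsH).symm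
    -- The source of `H` is not that of `Z`, so it has an in-arc, necessarily from outside `H`.
    obtain ⟨σ, hσH, hσ⟩ := hH.1.2.exists
    have hσ_not_source : ¬ Z.IsSource σ := fun hσs => hsH (hZ.unique hs hσs ▸ hσH)
    simp only [IsSource, not_forall, not_not] at hσ_not_source
    obtain ⟨a, r, haσ⟩ := hσ_not_source
    by_cases ha : a ∈ H
    · exact absurd haσ (hσ a ha r)
    · exact absurd (hC.out_inl_inr ⟨a, ha⟩ r σ haσ hσH) (ht _ r)

lemma reaches_of_out (hC : IsContraction Z H Z') (hret : Z.IsContractedRet H ret ret')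
    {a b : V} (ha : Z.InternallyReached H ret a) (hab : Z.out a (ret a) = some b) :
    Z'.Reaches ret' (contractMap H a) (contractMap H b) := by
  by_cases haH : a ∈ H <;> by_cases hbH : b ∈ H
  · rw [contractMap_of_mem haH, contractMap_of_mem hbH]
    exact .refl _
  · have hsel : Z.SelectsIn H ret a := ha.selectsIn haH (induce_out_of_not_mem hab hbH)
    rw [contractMap_of_mem haH, contractMap_of_not_mem hbH]
    refine .step ?_ (.refl _)
    rw [hret.ret_inr a hsel]
    exact hC.out_inr_inl _ b hbH ⟨a, haH, hab⟩
  · rw [contractMap_of_not_mem haH, contractMap_of_mem hbH]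
    refine .step ?_ (.refl _)
    rw [hret.ret_inl]
    exact hC.out_inl_inr ⟨a, haH⟩ _ b hab hbH
  · rw [contractMap_of_not_mem haH, contractMap_of_not_mem hbH]
    refine .step ?_ (.refl _)
    rw [hret.ret_inl]
    exact hC.out_inl_inl ⟨a, haH⟩ _ b hbH hab

lemma reaches (hC : IsContraction Z H Z') (hH : Z.IsModule H)
    (hret : Z.IsContractedRet H ret ret') {a b : V}
    (ha : Z.InternallyReached H ret a) (hab : Z.Reaches ret a b) :
    Z'.Reaches ret' (contractMap H a) (contractMap H b) := by
  induction hab with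
  | refl => exact .refl _
  | step hout _ ih =>
    exact (hC.reaches_of_out hret ha hout).trans (ih (ha.of_out hH hout))

lemma out_contractMap_eq_none (hC : IsContraction Z H Z') (hH : Z.IsModule H)
    (hret : Z.IsContractedRet H ret ret') {x : V}
    (hx : Z.InternallyReached H ret x) (hstop : Z.out x (ret x) = none) :
    Z'.out (contractMap H x) (ret' (contractMap H x)) = none := by
  by_cases hxH : x ∈ H
  · have hsel : Z.SelectsIn H ret x := hx.selectsIn hxH (induce_out_of_out_eq_none hstop)
    rw [contractMap_of_mem hxH, hret.ret_inr x hsel]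
    refine hC.out_inr_none _ ?_
    rintro ⟨a, haH, u, huH, hau⟩
    obtain ⟨_, hxu, -⟩ := hH.2.2 a haH _ u hau huH x hxH
    simp [hstop] at hxu
  · rw [contractMap_of_not_mem hxH, hret.ret_inl]
    exact hC.out_inl_none ⟨x, hxH⟩ _ hstop

theorem eq_contractMap_of_selectsFrom (hC : IsContraction Z H Z') (hZ : ∃! s, Z.IsSource s)
    (hH : Z.IsModule H) (hret : Z.IsContractedRet H ret ret') {x : V} (hx : Z.SelectsFrom ret x)
    {y : {v : V // v ∉ H} ⊕ Unit} (hy : Z'.SelectsFrom ret' y) : y = contractMap H x := by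
  obtain ⟨s, hs, hsx, hstop⟩ := hx
  obtain ⟨t, ht, hty, hystop⟩ := hy
  have hs_in : Z.InternallyReached H ret s := internallyReached_of_isSource hs
  have hrun := hC.reaches hH hret hs_in hsx
  have hrun_stop := hC.out_contractMap_eq_none hH hret (hs_in.reaches hH hsx) hstop
  rw [hC.eq_contractMap_of_isSource hZ hH hs ht] at hty
  exact (hrun.eq_of_out_eq_none hrun_stop hty hystop).symm

end IsContraction

end DGraph

theorem stmt_15_general {V R W S : Type} (Z : DGraph V R) (hZ : Z.IsDS)
    (H : Set V) (hH : Z.IsModule H) (lab : V → Act W S R)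
    (Z' : DGraph ({v : V // v ∉ H} ⊕ Unit) R)
    -- `Z'` is the module contraction `Z/H` :
    (hout1 : ∀ (v : {v : V // v ∉ H}) (r : R) (w : V) (hw : w ∉ H),
      Z.out v.1 r = some w → Z'.out (Sum.inl v) r = some (Sum.inl ⟨w, hw⟩))
    (hout2 : ∀ (v : {v : V // v ∉ H}) (r : R) (w : V),
      Z.out v.1 r = some w → w ∈ H → Z'.out (Sum.inl v) r = some (Sum.inr ()))
    (hout3 : ∀ (v : {v : V // v ∉ H}) (r : R),
      Z.out v.1 r = none → Z'.out (Sum.inl v) r = none)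
    (hout4 : ∀ (r : R) (w : V) (hw : w ∉ H),
      (∃ x ∈ H, Z.out x r = some w) → Z'.out (Sum.inr ()) r = some (Sum.inl ⟨w, hw⟩))
    (hout5 : ∀ r : R, (¬ ∃ x ∈ H, ∃ w, w ∉ H ∧ Z.out x r = some w) →
      Z'.out (Sum.inr ()) r = none)
    -- labels of `Z/H` : unchanged off `H`, and the contracted node carries the derived
    -- action `(H_B, H_R)` of the substructure `Z[H]` :
    (lab' : ({v : V // v ∉ H} ⊕ Unit) → Act W S R)
    (hlab1 : ∀ v : {v : V // v ∉ H}, lab' (Sum.inl v) = lab v.1)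
    (hlab2 : ∀ (w : W) (x : V), Z.SelectsIn H (fun u => (lab u).ret w) x →
      (lab' (Sum.inr ())).b w = (lab x).b w ∧
      (lab' (Sum.inr ())).ret w = (lab x).ret w) :
    ∀ (w : W) (x : V) (y : {v : V // v ∉ H} ⊕ Unit),
      Z.SelectsFrom (fun u => (lab u).ret w) x →
      Z'.SelectsFrom (fun u => (lab' u).ret w) y →
      (lab' y).b w = (lab x).b w := by
  intro w x y hx hy
  have hC : Z.IsContraction H Z' := ⟨hout1, hout2, hout3, hout4, hout5⟩
  obtain rfl := hC.eq_contractMap_of_selectsFrom (ret := fun u => (lab u).ret w) hZ.2.2 hH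
    ⟨fun v => by rw [hlab1], fun x hx => (hlab2 w x hx).2⟩ hx hy
  by_cases hxH : x ∈ H
  · rw [contractMap_of_mem hxH]
    exact (hlab2 w x (hx.selectsIn hH hxH)).1
  · rw [contractMap_of_not_mem hxH, hlab1]

/-- Module contraction preserves the selected behavior: if `H` is a
module of an action-labelled decision structure `Z` and `Z'` is the contraction of `H`
to a single node labelled by the derived action `(H_B, H_R)` of `Z[H]`, then for every
state `w` the behaviors selected by `Z` and `Z'` coincide: `Z_B(w) = (Z/H)_B(w)`. -/
theorem stmt_15 {V R W S : Type} [Fintype V] (Z : DGraph V R) (hZ : Z.IsDS)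
    (H : Set V) (hH : Z.IsModule H) (lab : V → Act W S R)
    (Z' : DGraph ({v : V // v ∉ H} ⊕ Unit) R)
    -- `Z'` is the module contraction `Z/H` :
    (hout1 : ∀ (v : {v : V // v ∉ H}) (r : R) (w : V) (hw : w ∉ H),
      Z.out v.1 r = some w → Z'.out (Sum.inl v) r = some (Sum.inl ⟨w, hw⟩))
    (hout2 : ∀ (v : {v : V // v ∉ H}) (r : R) (w : V),
      Z.out v.1 r = some w → w ∈ H → Z'.out (Sum.inl v) r = some (Sum.inr ()))
    (hout3 : ∀ (v : {v : V // v ∉ H}) (r : R),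
      Z.out v.1 r = none → Z'.out (Sum.inl v) r = none)
    (hout4 : ∀ (r : R) (w : V) (hw : w ∉ H),
      (∃ x ∈ H, Z.out x r = some w) → Z'.out (Sum.inr ()) r = some (Sum.inl ⟨w, hw⟩))
    (hout5 : ∀ r : R, (¬ ∃ x ∈ H, ∃ w, w ∉ H ∧ Z.out x r = some w) →
      Z'.out (Sum.inr ()) r = none)
    -- labels of `Z/H` : unchanged off `H`, and the contracted node carries the derived
    -- action `(H_B, H_R)` of the substructure `Z[H]` :
    (lab' : ({v : V // v ∉ H} ⊕ Unit) → Act W S R)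
    (hlab1 : ∀ v : {v : V // v ∉ H}, lab' (Sum.inl v) = lab v.1)
    (hlab2 : ∀ (w : W) (x : V), Z.SelectsIn H (fun u => (lab u).ret w) x →
      (lab' (Sum.inr ())).b w = (lab x).b w ∧
      (lab' (Sum.inr ())).ret w = (lab x).ret w) :
    ∀ (w : W) (x : V) (y : {v : V // v ∉ H} ⊕ Unit),
      Z.SelectsFrom (fun u => (lab u).ret w) x →
      Z'.SelectsFrom (fun u => (lab' u).ret w) y →
      (lab' y).b w = (lab x).b w :=
  stmt_15_general Z hZ H hH lab Z' hout1 hout2 hout3 hout4 hout5 lab' hlab1 hlab2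
end

section
/- Let M : W → Δ be an action selection mechanism over actions Δ = {α_1,...,α_n}, and suppose LTL formulas φ_1,...,φ_n are each equivalent to the corresponding action α_i (φ_i holds on a state sequence starting at w iff the suffix is a possible world trajectory under the signal α_i produces at w). Then the LTL formula Ψ_M = (M⁻¹(α_1) ∧ φ_1) ∨ ... ∨ (M⁻¹(α_n) ∧ φ_n), where M⁻¹(α_i) is the Boolean predicate on states defining when M selects α_i, is equivalent to the derived action (M_B, M_R) of M. -/
/-- An LTL formula `φ` (a set of infinite state sequences) models the action `a`, with
respect to the world `Wld` (which assigns to each signal and current state the set of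
possible subsequent state sequences): `φ` holds on every state sequence whose tail is a
possible world trajectory under the signal `a` produces at the first state. -/
def ModelsA {W S R : Type} (Wld : S → W → Set (ℕ → W))
    (φ : (ℕ → W) → Prop) (a : Act W S R) : Prop :=
  ∀ σ : ℕ → W, (fun k => σ (k + 1)) ∈ Wld (a.b (σ 0)) (σ 0) → φ σ

/-- `φ` is equivalent to the action `a`: it models `a` and conversely. -/
def EquivA {W S R : Type} (Wld : S → W → Set (ℕ → W))
    (φ : (ℕ → W) → Prop) (a : Act W S R) : Prop :=
  ∀ σ : ℕ → W, ((fun k => σ (k + 1)) ∈ Wld (a.b (σ 0)) (σ 0)) ↔ φ σ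

theorem stmt_17_general {W S R : Type} (Wld : S → W → Set (ℕ → W)) (n : ℕ)
    (acts : Fin n → Act W S R) (M : W → Fin n)
    (φ : Fin n → (ℕ → W) → Prop)
    (heq : ∀ i, EquivA Wld (φ i) (acts i)) :
    EquivA Wld (fun σ => ∃ i, M (σ 0) = i ∧ φ i σ)
      ⟨fun w => (acts (M w)).b w, fun w => (acts (M w)).ret w⟩ :=
  -- At the first state the derived action emits the signal of `acts (M (σ 0))`, definitionally.
  fun σ => (heq (M (σ 0)) σ).trans (exists_eq_left' (p := (φ · σ))).symm

/-- Let `M` be an action selection mechanism over actions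
`α_1, …, α_n` (its selection depends only on finitely many return-value predicates) and
let `φ_i` be LTL formulas equivalent to the `α_i`. Then
`Ψ_M = ⋁ i, (M⁻¹(α_i) ∧ φ_i)` is equivalent to the derived action `(M_B, M_R)` of `M`. -/
theorem stmt_17 {W S R : Type} (Wld : S → W → Set (ℕ → W)) (n : ℕ)
    (acts : Fin n → Act W S R) (M : W → Fin n)
    (hASM : ∃ Xs : Finset R, ∀ w1 w2 : W,
      (∀ i : Fin n, ∀ r ∈ Xs, ((acts i).ret w1 = r ↔ (acts i).ret w2 = r)) →
      M w1 = M w2)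
    (φ : Fin n → (ℕ → W) → Prop)
    (heq : ∀ i, EquivA Wld (φ i) (acts i)) :
    EquivA Wld (fun σ => ∃ i, M (σ 0) = i ∧ φ i σ)
      ⟨fun w => (acts (M w)).b w, fun w => (acts (M w)).ret w⟩ :=
  stmt_17_general Wld n acts M φ heq
end

section
/- Let Z be a decision structure with node v labelled by action α whose out-arcs carry labels r_1,...,r_m, and let β be another action with LTL models φ_α, φ_β respectively. If (i) φ_β entails φ_α and (ii) for all states w and all i, α_R(w) = r_i iff β_R(w) = r_i, then replacing α by β at v yields a structure Z' such that for every action γ the selection preimages agree, Z'⁻¹(γ) = Z⁻¹(γ) (with α mapped to β), and consequently if Z satisfies a specification φ under the LTL verification scheme (□Ψ_Z ⊨ φ), then so does Z' (□Ψ_{Z'} ⊨ φ). In particular this predicate is a sufficient condition for actions. -/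
/-! Condition (ii) says that `α` and `β` pick the same out-arc of `v0`, or both pick none, so
every node follows the same arc under `lab` and under `lab'`. The walk from the source and the
node where it stops are therefore unchanged, i.e. the selection preimages agree. Since moreover
`φ_β` strengthens `φ_α`, every run satisfying `□Ψ_{Z'}` satisfies `□Ψ_Z`, hence every
specification certified for `Z` is certified for `Z'`. -/

namespace DGraph

variable {V R : Type} {Z : DGraph V R}

theorem out_eq_out_of_forall_isSome {v : V} {a b : R}
    (h : ∀ r, (Z.out v r).isSome → (a = r ↔ b = r)) : Z.out v a = Z.out v b := by
  cases ha : Z.out v a with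
  | some x => rw [(h a (by simp [ha])).mp rfl, ha]
  | none =>
    cases hb : Z.out v b with
    | none => rfl
    | some y => rw [← (h b (by simp [hb])).mpr rfl, ha] at hb; cases hb

theorem Reaches.of_out_eq {ret ret' : V → R} (hout : ∀ u, Z.out u (ret u) = Z.out u (ret' u))
    {a b : V} (h : Z.Reaches ret a b) : Z.Reaches ret' a b := by
  induction h with
  | refl v => exact .refl v
  | step hstep _ ih => exact .step (hout _ ▸ hstep) ih

theorem selectsFrom_iff_of_out_eq {ret ret' : V → R}
    (hout : ∀ u, Z.out u (ret u) = Z.out u (ret' u)) (x : V) :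
    Z.SelectsFrom ret x ↔ Z.SelectsFrom ret' x := by
  have hout' : ∀ u, Z.out u (ret' u) = Z.out u (ret u) := fun u => (hout u).symm
  constructor
  · rintro ⟨s, hs, hreach, hstop⟩
    exact ⟨s, hs, hreach.of_out_eq hout, hout x ▸ hstop⟩
  · rintro ⟨s, hs, hreach, hstop⟩
    exact ⟨s, hs, hreach.of_out_eq hout', hout' x ▸ hstop⟩

end DGraph

/-- `□Ψ ⊨ ψ` for the canonical model `Ψ` of a structure whose selection relation is `sel` and
whose node `x` carries the model `φ x`. -/
def CertifiesAlways {V W : Type} (sel : W → V → Prop) (φ : V → (ℕ → W) → Prop)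
    (ψ : (ℕ → W) → Prop) : Prop :=
  ∀ σ : ℕ → W, (∀ i, ∃ x, sel (σ i) x ∧ φ x (fun k => σ (i + k))) → ψ σ

theorem CertifiesAlways.mono {V W : Type} {sel sel' : W → V → Prop}
    {φ φ' : V → (ℕ → W) → Prop} {ψ : (ℕ → W) → Prop} (h : CertifiesAlways sel φ ψ)
    (hsel : ∀ w x, sel' w x → sel w x) (hφ : ∀ x σ, φ' x σ → φ x σ) :
    CertifiesAlways sel' φ' ψ := fun σ hσ =>
  h σ fun i =>
    let ⟨x, hx, hφx⟩ := hσ i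
    ⟨x, hsel _ x hx, hφ x _ hφx⟩

theorem out_ret_update_eq {V R W S : Type} [DecidableEq V] (Z : DGraph V R)
    (lab : V → Act W S R) (v0 : V) (β : Act W S R)
    (hret : ∀ (w : W) (r : R), (Z.out v0 r).isSome → ((lab v0).ret w = r ↔ β.ret w = r))
    (w : W) (u : V) :
    Z.out u ((lab u).ret w) = Z.out u ((if u = v0 then β else lab u).ret w) := by
  split_ifs with hu
  · subst hu
    exact Z.out_eq_out_of_forall_isSome (hret w)
  · rfl

theorem stmt_19_general {V R W S : Type} [DecidableEq V]
    (Z : DGraph V R) (lab : V → Act W S R)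
    (v0 : V) (β : Act W S R)
    (φm : V → (ℕ → W) → Prop) (φβ : (ℕ → W) → Prop)
    (hent : ∀ σ : ℕ → W, φβ σ → φm v0 σ)
    (hret : ∀ (w : W) (r : R), (Z.out v0 r).isSome →
      ((lab v0).ret w = r ↔ β.ret w = r))
    (lab' : V → Act W S R)
    (hlab' : ∀ u : V, lab' u = if u = v0 then β else lab u) :
    (∀ (w : W) (x : V),
      Z.SelectsFrom (fun u => (lab u).ret w) x ↔
      Z.SelectsFrom (fun u => (lab' u).ret w) x) ∧
    (∀ ψ : (ℕ → W) → Prop,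
      (∀ σ : ℕ → W,
        (∀ i : ℕ, ∃ x : V, Z.SelectsFrom (fun u => (lab u).ret (σ i)) x ∧
          φm x (fun k => σ (i + k))) → ψ σ) →
      (∀ σ : ℕ → W,
        (∀ i : ℕ, ∃ x : V, Z.SelectsFrom (fun u => (lab' u).ret (σ i)) x ∧
          (if x = v0 then φβ else φm x) (fun k => σ (i + k))) → ψ σ)) := by
  have hsel : ∀ w x, Z.SelectsFrom (fun u => (lab u).ret w) x ↔
      Z.SelectsFrom (fun u => (lab' u).ret w) x := fun w =>
    Z.selectsFrom_iff_of_out_eq fun u => by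
      rw [hlab' u]
      exact out_ret_update_eq Z lab v0 β hret w u
  refine ⟨hsel, fun ψ hψ => CertifiesAlways.mono (φ := φm)
    (sel := fun w x => Z.SelectsFrom (fun u => (lab u).ret w) x) hψ (fun w x => (hsel w x).mpr) ?_⟩
  intro x σ hφ
  split_ifs at hφ with hx
  · exact hx ▸ hent σ hφ
  · exact hφ

/-- Replacing an action `α = lab v0` by `β` with (i) `φ_β ⊨ φ_α` and
(ii) identical return values on the labels of the out-arcs of `v0`, preserves the
selection preimages of the structure and preserves all specifications verified under the
LTL scheme `□Ψ_Z ⊨ ψ`. -/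
theorem stmt_19 {V R W S : Type} [Fintype V] [DecidableEq V]
    (Wld : S → W → Set (ℕ → W))
    (Z : DGraph V R) (hZ : Z.IsDS) (lab : V → Act W S R)
    (v0 : V) (β : Act W S R)
    (φm : V → (ℕ → W) → Prop) (φβ : (ℕ → W) → Prop)
    (hmods : ∀ x : V, ModelsA Wld (φm x) (lab x))
    (hβ : ModelsA Wld φβ β)
    (hent : ∀ σ : ℕ → W, φβ σ → φm v0 σ)
    (hret : ∀ (w : W) (r : R), (Z.out v0 r).isSome →
      ((lab v0).ret w = r ↔ β.ret w = r))
    (lab' : V → Act W S R)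
    (hlab' : ∀ u : V, lab' u = if u = v0 then β else lab u) :
    (∀ (w : W) (x : V),
      Z.SelectsFrom (fun u => (lab u).ret w) x ↔
      Z.SelectsFrom (fun u => (lab' u).ret w) x) ∧
    (∀ ψ : (ℕ → W) → Prop,
      (∀ σ : ℕ → W,
        (∀ i : ℕ, ∃ x : V, Z.SelectsFrom (fun u => (lab u).ret (σ i)) x ∧
          φm x (fun k => σ (i + k))) → ψ σ) →
      (∀ σ : ℕ → W,
        (∀ i : ℕ, ∃ x : V, Z.SelectsFrom (fun u => (lab' u).ret (σ i)) x ∧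
          (if x = v0 then φβ else φm x) (fun k => σ (i + k))) → ψ σ)) :=
  stmt_19_general Z lab v0 β φm φβ hent hret lab' hlab'
end
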